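/- arXiv:2605.27405 — 2 statements merged into one kernel-verified Lean document; each statement's English description precedes it below -/
import Mathlib

section
/- Let G be a simple graph of order n ≥ 2 with maximum degree d_1. Then m_G[0, d_1] = 1 if and only if G = K_2. -/
open Finset
open scoped Classical

/-- The signless Laplacian matrix `Q(G) = D(G) + A(G)` of a simple graph. -/
noncomputable def sLap {V : Type*} [Fintype V] [DecidableEq V] (G : SimpleGraph V) :
    Matrix V V ℝ :=
  Matrix.diagonal (fun v => (G.degree v : ℝ)) + G.adjMatrix ℝ

/-- Number of eigenvalues (with multiplicity) of a Hermitian matrix lying in a set. -/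
noncomputable def eigCount {V : Type*} [Fintype V] [DecidableEq V]
    {M : Matrix V V ℝ} (hM : M.IsHermitian) (s : Set ℝ) : ℕ :=
  (Finset.univ.filter fun i => hM.eigenvalues i ∈ s).card

section Helpers

open Matrix
open scoped InnerProductSpace

variable {n : ℕ}

/-- dotProduct is additive in the left argument over a finite sum. -/
lemma sum_dotProduct' {ι : Type*} [Fintype ι] (f : ι → (Fin n → ℝ)) (y : Fin n → ℝ) :
    (∑ j, f j) ⬝ᵥ y = ∑ j, f j ⬝ᵥ y := by
  simp only [dotProduct, Finset.sum_apply, Finset.sum_mul]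
  exact Finset.sum_comm

lemma dotProduct_sum' {ι : Type*} [Fintype ι] (x : Fin n → ℝ) (f : ι → (Fin n → ℝ)) :
    x ⬝ᵥ (∑ j, f j) = ∑ j, x ⬝ᵥ f j := by
  simp only [dotProduct, Finset.sum_apply, Finset.mul_sum]
  exact Finset.sum_comm

/-- Quadratic form evaluated on a linear combination of orthonormal eigenvectors. -/
lemma quad_repr {ι : Type*} [Fintype ι] [DecidableEq ι] (M : Matrix (Fin n) (Fin n) ℝ)
    (v : ι → (Fin n → ℝ)) (q : ι → ℝ) (c : ι → ℝ)
    (hMv : ∀ j, M *ᵥ v j = q j • v j)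
    (ho : ∀ j k, v j ⬝ᵥ v k = if j = k then (1 : ℝ) else 0) :
    (∑ j, c j • v j) ⬝ᵥ (M *ᵥ ∑ j, c j • v j) = ∑ j, c j ^ 2 * q j := by
  have hM : (M *ᵥ ∑ j, c j • v j) = ∑ j, (c j * q j) • v j := by
    rw [← Matrix.mulVecLin_apply, map_sum]
    refine Finset.sum_congr rfl fun j _ => ?_
    rw [_root_.map_smul, Matrix.mulVecLin_apply, hMv j, smul_smul]
  rw [hM, sum_dotProduct']
  refine Finset.sum_congr rfl fun j _ => ?_
  rw [dotProduct_sum']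
  have : ∀ k, (c j • v j) ⬝ᵥ ((c k * q k) • v k)
      = (c j * (c k * q k)) * (if j = k then (1:ℝ) else 0) := by
    intro k
    rw [smul_dotProduct, dotProduct_smul, ho j k, smul_eq_mul, smul_eq_mul]
    ring
  rw [Finset.sum_congr rfl fun k _ => this k]
  simp only [mul_ite, mul_one, mul_zero]
  rw [Finset.sum_ite_eq Finset.univ j (fun k => c j * (c k * q k))]
  simp; ring

lemma norm_repr {ι : Type*} [Fintype ι] [DecidableEq ι]
    (v : ι → (Fin n → ℝ)) (c : ι → ℝ)
    (ho : ∀ j k, v j ⬝ᵥ v k = if j = k then (1 : ℝ) else 0) :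
    (∑ j, c j • v j) ⬝ᵥ (∑ j, c j • v j) = ∑ j, c j ^ 2 := by
  have := quad_repr (1 : Matrix (Fin n) (Fin n) ℝ) v (fun _ => 1) c (fun j => by
    rw [Matrix.one_mulVec, one_smul]) ho
  simpa using this

end Helpers

section PSD

open Matrix

variable {n : ℕ} (G : SimpleGraph (Fin n))

lemma sLap_quad (x : Fin n → ℝ) :
    x ⬝ᵥ (sLap G *ᵥ x) =
      (∑ u, (G.degree u : ℝ) * x u ^ 2) + x ⬝ᵥ (G.adjMatrix ℝ *ᵥ x) := by
  rw [sLap, Matrix.add_mulVec, dotProduct_add]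
  congr 1
  simp only [dotProduct, Matrix.mulVec_diagonal]
  exact Finset.sum_congr rfl fun u _ => by ring

lemma deg_sum (f : Fin n → ℝ) (u : Fin n) :
    (∑ v, if G.Adj u v then f u else 0) = (G.degree u : ℝ) * f u := by
  rw [← Finset.sum_filter, Finset.sum_const, ← SimpleGraph.neighborFinset_eq_filter,
    ← SimpleGraph.degree, nsmul_eq_mul]

lemma sLap_quad_nonneg (x : Fin n → ℝ) : 0 ≤ x ⬝ᵥ (sLap G *ᵥ x) := by
  have h2 : 2 * (x ⬝ᵥ (sLap G *ᵥ x)) =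
      ∑ u, ∑ v, if G.Adj u v then (x u + x v) ^ 2 else 0 := by
    rw [sLap_quad, SimpleGraph.dotProduct_mulVec_adjMatrix]
    have expand : ∀ u v : Fin n, (if G.Adj u v then (x u + x v) ^ 2 else 0)
        = (if G.Adj u v then x u ^ 2 else 0) + 2 * (if G.Adj u v then x u * x v else 0)
          + (if G.Adj u v then x v ^ 2 else 0) := by
      intro u v; split_ifs <;> ring
    simp_rw [expand, Finset.sum_add_distrib]
    have t1 : (∑ u, ∑ v, if G.Adj u v then x u ^ 2 else 0) = ∑ u, (G.degree u : ℝ) * x u ^ 2 :=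
      Finset.sum_congr rfl fun u _ => deg_sum G (fun w => x w ^ 2) u
    have t3 : (∑ u : Fin n, ∑ v, if G.Adj u v then x v ^ 2 else 0)
        = ∑ u, (G.degree u : ℝ) * x u ^ 2 := by
      rw [Finset.sum_comm]
      refine Finset.sum_congr rfl fun v _ => ?_
      have : ∀ u, (if G.Adj u v then x v ^ 2 else 0) = (if G.Adj v u then x v ^ 2 else 0) := by
        intro u; rw [SimpleGraph.adj_comm]
      rw [Finset.sum_congr rfl fun u _ => this u]
      exact deg_sum G (fun w => x w ^ 2) v
    have t2 : (∑ u : Fin n, ∑ v, 2 * if G.Adj u v then x u * x v else 0)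
        = 2 * ∑ u : Fin n, ∑ v, if G.Adj u v then x u * x v else 0 := by
      rw [Finset.mul_sum]
      exact Finset.sum_congr rfl fun u _ => (Finset.mul_sum _ _ _).symm
    rw [t1, t3, t2]
    ring
  have hrhs : 0 ≤ ∑ u : Fin n, ∑ v, if G.Adj u v then (x u + x v) ^ 2 else 0 := by
    refine Finset.sum_nonneg fun u _ => Finset.sum_nonneg fun v _ => ?_
    split_ifs
    · positivity
    · exact le_refl 0
  linarith [h2, hrhs]

lemma sLap_posSemidef (hQ : (sLap G).IsHermitian) : (sLap G).PosSemidef := by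
  refine Matrix.posSemidef_iff_dotProduct_mulVec.mpr ⟨hQ, fun x => ?_⟩
  have hs : star x = x := rfl
  rw [hs]
  exact sLap_quad_nonneg G x

end PSD

section Trace

open Matrix

lemma trace_eq_sum_eigen {m : ℕ} {A : Matrix (Fin m) (Fin m) ℝ} (hA : A.IsHermitian) :
    A.trace = ∑ i, hA.eigenvalues i := by
  conv_lhs => rw [hA.spectral_theorem]
  rw [Unitary.conjStarAlgAut_apply, Matrix.trace_mul_cycle]
  rw [show (star (hA.eigenvectorUnitary : Matrix (Fin m) (Fin m) ℝ)) *
      (hA.eigenvectorUnitary : Matrix (Fin m) (Fin m) ℝ) = 1 from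
    Unitary.coe_star_mul_self hA.eigenvectorUnitary, Matrix.one_mul, Matrix.trace_diagonal]
  simp [RCLike.ofReal_real_eq_id]

lemma det_eq_prod_eigen {m : ℕ} {A : Matrix (Fin m) (Fin m) ℝ} (hA : A.IsHermitian) :
    A.det = ∏ i, hA.eigenvalues i := by
  have := hA.det_eq_prod_eigenvalues
  simpa [RCLike.ofReal_real_eq_id] using this

end Trace

section LI

open Matrix

variable {n : ℕ}

lemma li_of_dotOrth {ι : Type*} [Fintype ι] [DecidableEq ι] (v : ι → (Fin n → ℝ))
    (h : ∀ j k, v j ⬝ᵥ v k = if j = k then (1 : ℝ) else 0) :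
    LinearIndependent ℝ v := by
  rw [Fintype.linearIndependent_iff]
  intro c hc k
  have h0 : ((∑ j, c j • v j) ⬝ᵥ v k) = 0 := by rw [hc]; simp
  rw [sum_dotProduct'] at h0
  have : ∀ j, (c j • v j) ⬝ᵥ v k = if j = k then c j else 0 := by
    intro j
    rw [smul_dotProduct, h j k, smul_eq_mul]
    split_ifs <;> ring
  rw [Finset.sum_congr rfl fun j _ => this j, Finset.sum_ite_eq' Finset.univ k (fun j => c j)] at h0
  simpa using h0

end LI

section Main

open Matrix
open scoped InnerProductSpace

variable {n : ℕ}

lemma no_neg_plane (hn : 2 ≤ n) (G : SimpleGraph (Fin n)) (hQ : (sLap G).IsHermitian)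
    (h1 : eigCount hQ (Set.Icc (0 : ℝ) (G.maxDegree : ℝ)) = 1)
    (u1 u2 : Fin n → ℝ) (hli : LinearIndependent ℝ ![u1, u2])
    (hU : ∀ x : Fin n → ℝ, x ∈ Submodule.span ℝ (Set.range ![u1, u2]) →
      x ⬝ᵥ (G.adjMatrix ℝ *ᵥ x) ≤ 0) : False := by
  classical
  set d1 : ℝ := (G.maxDegree : ℝ) with hd1def
  have hpsd : (sLap G).PosSemidef := sLap_posSemidef G hQ
  have heignn : ∀ i, 0 ≤ hQ.eigenvalues i := fun i => hpsd.eigenvalues_nonneg i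
  set s : Finset (Fin n) :=
    Finset.univ.filter (fun i => hQ.eigenvalues i ∉ Set.Icc (0 : ℝ) d1) with hsdef
  have hscard : s.card = n - 1 := by
    have hsplit := Finset.card_filter_add_card_filter_not
      (s := (Finset.univ : Finset (Fin n)))
      (p := fun i => hQ.eigenvalues i ∈ Set.Icc (0 : ℝ) d1)
    have h1' : (Finset.univ.filter
        (fun i => hQ.eigenvalues i ∈ Set.Icc (0 : ℝ) d1)).card = 1 := by
      simpa [eigCount] using h1
    rw [Finset.card_univ, Fintype.card_fin] at hsplit
    have : s.card = (Finset.univ.filter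
        (fun i => ¬ hQ.eigenvalues i ∈ Set.Icc (0 : ℝ) d1)).card := by
      rw [hsdef]
    omega
  -- eigenvector family, as plain functions
  set ev : Fin n → (Fin n → ℝ) := fun i => ⇑(hQ.eigenvectorBasis i) with hevdef
  have hvorth : ∀ i j, ev i ⬝ᵥ ev j = if i = j then (1 : ℝ) else 0 := by
    intro i j
    have h2 : ⟪hQ.eigenvectorBasis i, hQ.eigenvectorBasis j⟫_ℝ = ev i ⬝ᵥ ev j := by
      simp [PiLp.inner_apply, dotProduct, hevdef, mul_comm]
    rw [← h2]
    exact orthonormal_iff_ite.mp hQ.eigenvectorBasis.orthonormal i j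
  set g : {i // i ∈ s} → (Fin n → ℝ) := fun j => ev j.1 with hgdef
  have hgorth : ∀ j k : {i // i ∈ s}, g j ⬝ᵥ g k = if j = k then (1 : ℝ) else 0 := by
    intro j k
    rw [hgdef]
    simp only []
    rw [hvorth j.1 k.1]
    exact if_congr Subtype.ext_iff.symm rfl rfl
  have hgli : LinearIndependent ℝ g := li_of_dotOrth g hgorth
  set W : Submodule ℝ (Fin n → ℝ) := Submodule.span ℝ (Set.range g) with hWdef
  set U : Submodule ℝ (Fin n → ℝ) := Submodule.span ℝ (Set.range ![u1, u2]) with hUdef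
  have hWrank : Module.finrank ℝ W = n - 1 := by
    rw [hWdef, finrank_span_eq_card hgli, Fintype.card_coe, hscard]
  have hUrank : Module.finrank ℝ U = 2 := by
    rw [hUdef, finrank_span_eq_card hli, Fintype.card_fin]
  have hsumrank := Submodule.finrank_sup_add_finrank_inf_eq W U
  have hle : Module.finrank ℝ ↥(W ⊔ U) ≤ n := by
    have h := Submodule.finrank_le (W ⊔ U)
    rwa [Module.finrank_fin_fun] at h
  have hpos : 0 < Module.finrank ℝ ↥(W ⊓ U) := by omega
  have hne : W ⊓ U ≠ ⊥ := by
    intro hbot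
    rw [hbot, finrank_bot] at hpos
    exact lt_irrefl 0 hpos
  obtain ⟨x, hxmem, hx0⟩ := Submodule.exists_mem_ne_zero_of_ne_bot hne
  obtain ⟨c, hc⟩ := (Submodule.mem_span_range_iff_exists_fun ℝ).mp (hxmem.1 : x ∈ W)
  have hq : ∀ j : {i // i ∈ s}, sLap G *ᵥ g j = hQ.eigenvalues j.1 • g j := fun j =>
    hQ.mulVec_eigenvectorBasis j.1
  have hxQ : x ⬝ᵥ (sLap G *ᵥ x) = ∑ j, c j ^ 2 * hQ.eigenvalues j.1 := by
    rw [← hc]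
    exact quad_repr (sLap G) g (fun j => hQ.eigenvalues j.1) c hq hgorth
  have hxx : x ⬝ᵥ x = ∑ j, c j ^ 2 := by
    rw [← hc]
    exact norm_repr g c hgorth
  have hcne : ∃ j, c j ≠ 0 := by
    by_contra hcontra
    push_neg at hcontra
    apply hx0
    rw [← hc]
    simp [hcontra]
  have hqgt : ∀ j : {i // i ∈ s}, d1 < hQ.eigenvalues j.1 := by
    intro j
    have hj : hQ.eigenvalues j.1 ∉ Set.Icc (0 : ℝ) d1 := (Finset.mem_filter.mp j.2).2
    rw [Set.mem_Icc, not_and_or] at hj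
    rcases hj with h | h
    · exact absurd (heignn j.1) h
    · exact lt_of_not_ge h
  obtain ⟨j0, hj0⟩ := hcne
  have hgt : d1 * (x ⬝ᵥ x) < x ⬝ᵥ (sLap G *ᵥ x) := by
    rw [hxQ, hxx, Finset.mul_sum]
    apply Finset.sum_lt_sum
    · intro j _
      have := hqgt j
      nlinarith [sq_nonneg (c j)]
    · refine ⟨j0, Finset.mem_univ j0, ?_⟩
      have h1 := hqgt j0
      have h2 : 0 < c j0 ^ 2 := by positivity
      nlinarith
  have hdeg : (∑ u, (G.degree u : ℝ) * x u ^ 2) ≤ d1 * (x ⬝ᵥ x) := by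
    have hxxsq : x ⬝ᵥ x = ∑ u, x u ^ 2 := by
      simp [dotProduct, sq]
    rw [hxxsq, Finset.mul_sum]
    apply Finset.sum_le_sum
    intro u _
    have hdle : (G.degree u : ℝ) ≤ d1 := by
      rw [hd1def]
      exact_mod_cast G.degree_le_maxDegree u
    nlinarith [sq_nonneg (x u)]
  have hquad := sLap_quad G x
  have hUx := hU x (hxmem.2 : x ∈ U)
  linarith

end Main

open Matrix in
theorem stmt15 {n : ℕ} (hn : 2 ≤ n) (G : SimpleGraph (Fin n))
    (hQ : (sLap G).IsHermitian) :
    eigCount hQ (Set.Icc (0 : ℝ) (G.maxDegree : ℝ)) = 1 ↔ (n = 2 ∧ G = ⊤) := by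
  constructor
  · intro h1
    by_cases hcomp : ∀ a b : Fin n, a ≠ b → G.Adj a b
    · have hn2 : n = 2 := by
        by_contra hne
        have hn3 : 3 ≤ n := by
          rcases Nat.lt_or_ge n 3 with h | h
          · omega
          · exact h
        set a : Fin n := ⟨0, by omega⟩ with hadef
        set b : Fin n := ⟨1, by omega⟩ with hbdef
        set c : Fin n := ⟨2, by omega⟩ with hcdef
        have hab : a ≠ b := by simp [hadef, hbdef, Fin.ext_iff]
        have hac : a ≠ c := by simp [hadef, hcdef, Fin.ext_iff]
        have hbc : b ≠ c := by simp [hbdef, hcdef, Fin.ext_iff]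
        refine no_neg_plane hn G hQ h1
          (Pi.single a 1 - Pi.single b 1) (Pi.single a 1 - Pi.single c 1) ?_ ?_
        · rw [LinearIndependent.pair_iff]
          intro s t hst
          have e1 := congrFun hst b
          have e2 := congrFun hst c
          simp [Pi.single_apply, hab.symm, hac.symm, hbc, hbc.symm,
            Ne.symm hab, Ne.symm hac] at e1 e2
          constructor <;> linarith
        · intro x hx
          obtain ⟨cc, hcc⟩ := (Submodule.mem_span_range_iff_exists_fun ℝ).mp hx
          rw [Fin.sum_univ_two] at hcc
          simp only [Matrix.cons_val_zero, Matrix.cons_val_one, Matrix.head_cons] at hcc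
          have hsum : ∑ u, x u = 0 := by
            rw [← hcc]
            simp [Finset.sum_add_distrib, Finset.sum_sub_distrib, Pi.single_apply,
              Finset.sum_ite_eq, Finset.sum_apply, Pi.add_apply, Pi.smul_apply, Pi.sub_apply,
              smul_eq_mul, Finset.mul_sum, mul_sub]
          have hAx : G.adjMatrix ℝ *ᵥ x = fun u => (∑ v, x v) - x u := by
            funext u
            rw [SimpleGraph.adjMatrix_mulVec_apply]
            have hnb : G.neighborFinset u = Finset.univ.erase u := by
              ext w
              simp only [SimpleGraph.mem_neighborFinset, Finset.mem_erase, Finset.mem_univ,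
                and_true]
              constructor
              · intro h; exact (G.ne_of_adj h).symm
              · intro h; exact hcomp u w (Ne.symm h)
            rw [hnb, Finset.sum_erase_eq_sub (Finset.mem_univ u)]
          rw [hAx]
          have heq : x ⬝ᵥ (fun u => (∑ v, x v) - x u) = -∑ u, x u ^ 2 := by
            simp only [dotProduct, hsum, zero_sub, Finset.sum_neg_distrib]
            rw [← Finset.sum_neg_distrib]
            exact Finset.sum_congr rfl fun u _ => by ring
          rw [heq, neg_nonpos]
          exact Finset.sum_nonneg fun u _ => sq_nonneg (x u)
      subst hn2
      refine ⟨rfl, ?_⟩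
      ext a b
      simp only [SimpleGraph.top_adj]
      exact ⟨fun h => G.ne_of_adj h, fun h => hcomp a b h⟩
    · exfalso
      push_neg at hcomp
      obtain ⟨a, b, hab, hnadj⟩ := hcomp
      have hnadj' : ¬ G.Adj b a := fun h => hnadj h.symm
      refine no_neg_plane hn G hQ h1 (Pi.single a 1) (Pi.single b 1) ?_ ?_
      · rw [LinearIndependent.pair_iff]
        intro s t hst
        have e1 := congrFun hst a
        have e2 := congrFun hst b
        simp [Pi.single_apply, hab, Ne.symm hab] at e1 e2
        exact ⟨e1, e2⟩
      · intro x hx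
        obtain ⟨cc, hcc⟩ := (Submodule.mem_span_range_iff_exists_fun ℝ).mp hx
        rw [Fin.sum_univ_two] at hcc
        simp only [Matrix.cons_val_zero, Matrix.cons_val_one, Matrix.head_cons] at hcc
        have heq : x ⬝ᵥ (G.adjMatrix ℝ *ᵥ x) = 0 := by
          rw [← hcc]
          simp [Matrix.mulVec_add, Matrix.mulVec_smul, Matrix.mulVec_single,
            add_dotProduct, smul_dotProduct, single_dotProduct,
            dotProduct_add, dotProduct_smul,
            SimpleGraph.adjMatrix_apply, hnadj, hnadj', SimpleGraph.irrefl]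
        rw [heq]
  · rintro ⟨hn2, hGtop⟩
    subst hn2
    subst hGtop
    have hdeg : ∀ (v : Fin 2) (i : Fintype ((⊤ : SimpleGraph (Fin 2)).neighborSet v)),
        @SimpleGraph.degree _ ⊤ v i = 1 := by
      intro v i
      have h2 := SimpleGraph.complete_graph_degree (V := Fin 2) v
      rw [Fintype.card_fin] at h2
      convert h2 using 2
    have hmax1 : (⊤ : SimpleGraph (Fin 2)).maxDegree = 1 := by
      apply le_antisymm
      · exact SimpleGraph.maxDegree_le_of_forall_degree_le _ 1 fun v => le_of_eq (hdeg v _)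
      · have h0 := SimpleGraph.degree_le_maxDegree (G := (⊤ : SimpleGraph (Fin 2))) (0 : Fin 2)
        rw [hdeg 0 _] at h0
        convert h0 using 2
    have hmaxgen : ∀ (i : DecidableRel (⊤ : SimpleGraph (Fin 2)).Adj),
        @SimpleGraph.maxDegree (Fin 2) ⊤ _ i = 1 := by
      intro i
      convert hmax1 using 2
    have htr : (sLap (⊤ : SimpleGraph (Fin 2))).trace = 2 := by
      rw [Matrix.trace_fin_two]
      simp [sLap, Matrix.add_apply, SimpleGraph.adjMatrix_apply, hdeg]
      norm_num
    have hdet : (sLap (⊤ : SimpleGraph (Fin 2))).det = 0 := by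
      rw [Matrix.det_fin_two]
      simp [sLap, Matrix.add_apply, SimpleGraph.adjMatrix_apply, hdeg,
        Matrix.diagonal_apply, SimpleGraph.top_adj]
    have hsum : hQ.eigenvalues 0 + hQ.eigenvalues 1 = 2 := by
      have h := trace_eq_sum_eigen hQ
      rw [htr, Fin.sum_univ_two] at h
      linarith
    have hprod : hQ.eigenvalues 0 * hQ.eigenvalues 1 = 0 := by
      have h := det_eq_prod_eigen hQ
      rw [hdet, Fin.prod_univ_two] at h
      linarith [h]
    unfold eigCount
    rw [Finset.card_filter, Fin.sum_univ_two]
    simp only [hmaxgen]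
    rcases mul_eq_zero.mp hprod with h0 | h0
    · have h1' : hQ.eigenvalues 1 = 2 := by linarith
      simp [h0, h1', Set.mem_Icc]
    · have h1' : hQ.eigenvalues 0 = 2 := by linarith
      simp [h0, h1', Set.mem_Icc]
end

section
/- There is no simple graph G of order n ≥ 3 such that exactly one signless Laplacian eigenvalue of G lies in the interval [0, d_3], where d_3 is the third largest vertex degree. -/
open Finset
open scoped Classical

open Matrix


section PartI
variable {n : ℕ} {M : Matrix (Fin n) (Fin n) ℝ}

lemma mulVec_expand (hM : M.IsHermitian) (x : EuclideanSpace ℝ (Fin n)) :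
    M *ᵥ (x : Fin n → ℝ) =
      ∑ i, (hM.eigenvectorBasis.repr x i * hM.eigenvalues i) • ⇑(hM.eigenvectorBasis i) := by
  conv_lhs => rw [← hM.eigenvectorBasis.sum_repr x]
  show M.mulVecLin _ = _
  rw [WithLp.ofLp_sum, map_sum]
  refine Finset.sum_congr rfl fun i _ => ?_
  rw [WithLp.ofLp_smul, _root_.map_smul]
  show (hM.eigenvectorBasis.repr x i) • (M *ᵥ ⇑(hM.eigenvectorBasis i)) = _
  rw [hM.mulVec_eigenvectorBasis, smul_smul]

lemma quad_expand (hM : M.IsHermitian) (x : EuclideanSpace ℝ (Fin n)) :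
    (x : Fin n → ℝ) ⬝ᵥ (M *ᵥ (x : Fin n → ℝ)) =
      ∑ i, hM.eigenvalues i * (hM.eigenvectorBasis.repr x i)^2 := by
  have h1 : (x : Fin n → ℝ) ⬝ᵥ (M *ᵥ (x : Fin n → ℝ)) =
      (inner ℝ x (WithLp.toLp 2 (M *ᵥ (x : Fin n → ℝ)) : EuclideanSpace ℝ (Fin n)) : ℝ) := by
    rw [PiLp.inner_apply]
    simp [dotProduct, mul_comm]
  rw [h1]
  have h2 : (WithLp.toLp 2 (M *ᵥ (x : Fin n → ℝ)) : EuclideanSpace ℝ (Fin n)) =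
      ∑ i, (hM.eigenvectorBasis.repr x i * hM.eigenvalues i) • (hM.eigenvectorBasis i) := by
    ext j
    rw [mulVec_expand hM x]
    simp only [WithLp.ofLp_toLp, WithLp.ofLp_sum, WithLp.ofLp_smul]
  rw [h2]
  nth_rewrite 1 [← hM.eigenvectorBasis.sum_repr x]
  rw [hM.eigenvectorBasis.orthonormal.inner_sum]
  refine Finset.sum_congr rfl fun i _ => ?_
  simp [pow_two]
  ring

lemma dot_expand (hM : M.IsHermitian) (x : EuclideanSpace ℝ (Fin n)) :
    (x : Fin n → ℝ) ⬝ᵥ (x : Fin n → ℝ) = ∑ i, (hM.eigenvectorBasis.repr x i)^2 := by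
  have h1 : (x : Fin n → ℝ) ⬝ᵥ (x : Fin n → ℝ) = (inner ℝ x x : ℝ) := by
    rw [PiLp.inner_apply]; simp [dotProduct, mul_comm, pow_two]
  rw [h1]
  nth_rewrite 1 [← hM.eigenvectorBasis.sum_repr x]
  nth_rewrite 2 [← hM.eigenvectorBasis.sum_repr x]
  rw [hM.eigenvectorBasis.orthonormal.inner_sum]
  refine Finset.sum_congr rfl fun i _ => ?_
  simp [pow_two]

lemma eigenvalues_nonneg (hM : M.IsHermitian)
    (hpos : ∀ x : Fin n → ℝ, 0 ≤ x ⬝ᵥ (M *ᵥ x)) (i : Fin n) : 0 ≤ hM.eigenvalues i := by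
  rw [hM.eigenvalues_eq]
  simpa using hpos (hM.eigenvectorBasis i)

end PartI

section Key
variable {n : ℕ} {M : Matrix (Fin n) (Fin n) ℝ}

/-- If `z ≠ 0` has small Rayleigh quotient and the eigenvalues `≤ t` are confined to
index `i0`, then the `i0` coordinate of `z` is nonzero. -/
lemma crux (hM : M.IsHermitian) (t : ℝ)
    (hev : ∀ i, 0 ≤ hM.eigenvalues i) (i0 : Fin n)
    (hS : ∀ i, hM.eigenvalues i ∈ Set.Icc (0:ℝ) t → i = i0)
    (z : EuclideanSpace ℝ (Fin n)) (hz : z ≠ 0)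
    (hq : (z : Fin n → ℝ) ⬝ᵥ (M *ᵥ (z : Fin n → ℝ)) ≤ t * ((z : Fin n → ℝ) ⬝ᵥ (z : Fin n → ℝ))) :
    hM.eigenvectorBasis.repr z i0 ≠ 0 := by
  intro h0
  set c : Fin n → ℝ := fun i => hM.eigenvectorBasis.repr z i with hc
  have hsum : ∑ i, (hM.eigenvalues i - t) * (c i)^2 ≤ 0 := by
    have := hq
    rw [quad_expand hM z, dot_expand hM z, Finset.mul_sum] at this
    have h' := sub_nonpos.mpr this
    rw [← Finset.sum_sub_distrib] at h'
    calc ∑ i, (hM.eigenvalues i - t) * (c i)^2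
        = ∑ i, (hM.eigenvalues i * (c i)^2 - t * (c i)^2) := by
          refine Finset.sum_congr rfl fun i _ => by ring
      _ ≤ 0 := h'
  have hterm : ∀ i, 0 ≤ (hM.eigenvalues i - t) * (c i)^2 := by
    intro i
    by_cases hi : i = i0
    · subst hi
      have hc0 : c i = 0 := h0
      rw [hc0]; simp
    · have : ¬ hM.eigenvalues i ∈ Set.Icc (0:ℝ) t := fun hmem => hi (hS i hmem)
      have hgt : t < hM.eigenvalues i := by
        rcases lt_or_ge t (hM.eigenvalues i) with h | h
        · exact h
        · exact absurd ⟨hev i, h⟩ this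
      exact mul_nonneg (by linarith) (sq_nonneg _)
  have hzero : ∀ i, (hM.eigenvalues i - t) * (c i)^2 = 0 := by
    intro i
    have := (Finset.sum_eq_zero_iff_of_nonneg (fun i _ => hterm i)).mp
      (le_antisymm hsum (Finset.sum_nonneg fun i _ => hterm i))
    exact this i (Finset.mem_univ i)
  have hci : ∀ i, c i = 0 := by
    intro i
    by_cases hi : i = i0
    · subst hi; exact h0
    · have : ¬ hM.eigenvalues i ∈ Set.Icc (0:ℝ) t := fun hmem => hi (hS i hmem)
      have hgt : t < hM.eigenvalues i := by
        rcases lt_or_ge t (hM.eigenvalues i) with h | h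
        · exact h
        · exact absurd ⟨hev i, h⟩ this
      have := hzero i
      have hne : hM.eigenvalues i - t ≠ 0 := by linarith
      have : (c i)^2 = 0 := by
        rcases mul_eq_zero.mp this with h | h
        · exact absurd h hne
        · exact h
      exact pow_eq_zero_iff (by norm_num) |>.mp this
  apply hz
  have := hM.eigenvectorBasis.sum_repr z
  rw [← this]
  refine Finset.sum_eq_zero fun i _ => ?_
  rw [show hM.eigenvectorBasis.repr z i = c i from rfl, hci i, zero_smul]

/-- Main abstract lemma: a PSD-quadratic-form matrix admitting two independent vectors whose
span has Rayleigh quotient `≤ t` has at least two eigenvalues in `[0, t]`. -/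
lemma two_le_count (hM : M.IsHermitian) (t : ℝ)
    (hpos : ∀ v : Fin n → ℝ, 0 ≤ v ⬝ᵥ (M *ᵥ v))
    (x y : Fin n → ℝ)
    (hind : ∀ a b : ℝ, a • x + b • y = 0 → a = 0 ∧ b = 0)
    (hquad : ∀ a b : ℝ, (a • x + b • y) ⬝ᵥ (M *ᵥ (a • x + b • y)) ≤
      t * ((a • x + b • y) ⬝ᵥ (a • x + b • y))) :
    2 ≤ (Finset.univ.filter fun i => hM.eigenvalues i ∈ Set.Icc (0:ℝ) t).card := by
  have hev := fun i => eigenvalues_nonneg hM hpos i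
  by_contra hlt
  push_neg at hlt
  have hcard : (Finset.univ.filter fun i => hM.eigenvalues i ∈ Set.Icc (0:ℝ) t).card ≤ 1 := by
    omega
  -- x and y are nonzero
  have hx0 : x ≠ 0 := by
    intro h
    have := hind 1 0 (by rw [h]; simp)
    exact one_ne_zero this.1
  have hNE : Nonempty (Fin n) := by
    rcases Nat.eq_zero_or_pos n with h | h
    · exfalso; apply hx0; funext i; exact absurd i.isLt (by omega)
    · exact ⟨⟨0, h⟩⟩
  obtain ⟨i0, hS⟩ : ∃ i0 : Fin n, ∀ i, hM.eigenvalues i ∈ Set.Icc (0:ℝ) t → i = i0 := by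
    rcases Finset.eq_empty_or_nonempty
        (Finset.univ.filter fun i => hM.eigenvalues i ∈ Set.Icc (0:ℝ) t) with h | ⟨j, hj⟩
    · refine ⟨Classical.arbitrary _, fun i hi => ?_⟩
      exfalso
      have hmem : i ∈ Finset.univ.filter fun j => hM.eigenvalues j ∈ Set.Icc (0:ℝ) t :=
        Finset.mem_filter.mpr ⟨Finset.mem_univ i, hi⟩
      rw [h] at hmem
      exact Finset.notMem_empty i hmem
    · refine ⟨j, fun i hi => ?_⟩
      exact Finset.card_le_one.mp hcard i (Finset.mem_filter.mpr ⟨Finset.mem_univ i, hi⟩) j hj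
  have hy0 : y ≠ 0 := by
    intro h
    have := hind 0 1 (by rw [h]; simp)
    exact one_ne_zero this.2
  set c0 : (Fin n → ℝ) → ℝ := fun v => hM.eigenvectorBasis.repr (WithLp.toLp 2 v) i0 with hc0
  have hcx : c0 x ≠ 0 := by
    have := crux hM t hev i0 hS (WithLp.toLp 2 x) (by simpa using hx0) ?_
    · exact this
    · have := hquad 1 0; simpa using this
  have hcy : c0 y ≠ 0 := by
    have := crux hM t hev i0 hS (WithLp.toLp 2 y) (by simpa using hy0) ?_
    · exact this
    · have := hquad 0 1; simpa using this
  -- the combination with vanishing i0-coordinate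
  set z : Fin n → ℝ := (c0 y) • x + (-(c0 x)) • y with hzdef
  have hz0 : z ≠ 0 := by
    intro h
    have := hind (c0 y) (-(c0 x)) h
    exact hcy this.1
  have hcz : c0 z = 0 := by
    have hlin : hM.eigenvectorBasis.repr (WithLp.toLp 2 ((c0 y) • x + (-(c0 x)) • y))
        = (c0 y) • hM.eigenvectorBasis.repr (WithLp.toLp 2 x) + (-(c0 x)) • hM.eigenvectorBasis.repr (WithLp.toLp 2 y) := by
      rw [WithLp.toLp_add, WithLp.toLp_smul, WithLp.toLp_smul, map_add, _root_.map_smul, _root_.map_smul]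
    have : c0 z = (c0 y) * (c0 x) + (-(c0 x)) * (c0 y) := by
      rw [hc0]
      show hM.eigenvectorBasis.repr (WithLp.toLp 2 z) i0 = _
      rw [hzdef]
      rw [hlin]
      simp [PiLp.add_apply, PiLp.smul_apply, hc0]
    rw [this]; ring
  exact crux hM t hev i0 hS (WithLp.toLp 2 z) (by simpa using hz0) (hquad (c0 y) (-(c0 x))) hcz

end Key

section Graph
variable {n : ℕ}

noncomputable def ev (v : Fin n) : Fin n → ℝ := Pi.single v 1

lemma sLap_diag (G : SimpleGraph (Fin n)) (v : Fin n) : sLap G v v = (G.degree v : ℝ) := by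
  simp [sLap]

lemma sLap_offdiag (G : SimpleGraph (Fin n)) {u v : Fin n} (h : u ≠ v) :
    sLap G u v = if G.Adj u v then 1 else 0 := by
  simp [sLap, Matrix.diagonal_apply_ne _ h]

lemma quad2 (M : Matrix (Fin n) (Fin n) ℝ) (u v : Fin n) (a b : ℝ) :
    (a • ev u + b • ev v) ⬝ᵥ (M *ᵥ (a • ev u + b • ev v)) =
      a^2 * M u u + b^2 * M v v + a*b*(M u v + M v u) := by
  simp [ev, Matrix.mulVec_add, Matrix.mulVec_smul, dotProduct_add,
    add_dotProduct, dotProduct_smul, smul_dotProduct,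
    Matrix.mulVec_single, single_dotProduct, dotProduct_single]
  ring

lemma dot2 (u v : Fin n) (huv : u ≠ v) (a b : ℝ) :
    (a • ev u + b • ev v) ⬝ᵥ (a • ev u + b • ev v) = a^2 + b^2 := by
  simp [ev, dotProduct_add, add_dotProduct, dotProduct_smul,
    smul_dotProduct, single_dotProduct, dotProduct_single,
    Pi.single_eq_of_ne huv, Pi.single_eq_of_ne huv.symm]
  ring

lemma quad3 (M : Matrix (Fin n) (Fin n) ℝ) (u v w : Fin n) (a b c : ℝ) :
    (a • ev u + b • ev v + c • ev w) ⬝ᵥ (M *ᵥ (a • ev u + b • ev v + c • ev w)) =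
      a^2 * M u u + b^2 * M v v + c^2 * M w w
        + a*b*(M u v + M v u) + a*c*(M u w + M w u) + b*c*(M v w + M w v) := by
  simp [ev, Matrix.mulVec_add, Matrix.mulVec_smul, dotProduct_add,
    add_dotProduct, dotProduct_smul, smul_dotProduct,
    Matrix.mulVec_single, single_dotProduct, dotProduct_single]
  ring

lemma dot3 (u v w : Fin n) (huv : u ≠ v) (huw : u ≠ w) (hvw : v ≠ w) (a b c : ℝ) :
    (a • ev u + b • ev v + c • ev w) ⬝ᵥ (a • ev u + b • ev v + c • ev w) =
      a^2 + b^2 + c^2 := by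
  simp [ev, dotProduct_add, add_dotProduct, dotProduct_smul,
    smul_dotProduct, single_dotProduct, dotProduct_single,
    Pi.single_eq_of_ne huv, Pi.single_eq_of_ne huv.symm, Pi.single_eq_of_ne huw,
    Pi.single_eq_of_ne huw.symm, Pi.single_eq_of_ne hvw, Pi.single_eq_of_ne hvw.symm]
  ring

lemma eval2 (u v : Fin n) (huv : u ≠ v) (a b : ℝ) :
    (a • ev u + b • ev v) u = a := by
  simp [ev, Pi.single_eq_of_ne huv.symm, Pi.single_eq_of_ne huv]

/-- The signless Laplacian is positive semidefinite. -/
lemma sLap_pos (G : SimpleGraph (Fin n)) (x : Fin n → ℝ) : 0 ≤ x ⬝ᵥ (sLap G *ᵥ x) := by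
  have hq : x ⬝ᵥ (sLap G *ᵥ x) =
      ∑ v, ∑ u, (if G.Adj v u then x v ^ 2 + x v * x u else 0) := by
    rw [sLap, Matrix.add_mulVec, dotProduct_add]
    have h1 : x ⬝ᵥ (Matrix.diagonal (fun v => (G.degree v : ℝ)) *ᵥ x)
        = ∑ v, ∑ u, (if G.Adj v u then x v ^ 2 else 0) := by
      have : ∀ v, ∑ u, (if G.Adj v u then x v ^ 2 else 0) = (G.degree v : ℝ) * x v ^ 2 := by
        intro v
        rw [Finset.sum_ite, Finset.sum_const, Finset.sum_const_zero, add_zero,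
          ← SimpleGraph.neighborFinset_eq_filter, SimpleGraph.card_neighborFinset_eq_degree]
        simp [nsmul_eq_mul]
      simp only [this]
      simp [dotProduct, Matrix.mulVec_diagonal]
      refine Finset.sum_congr rfl fun v _ => by ring
    have h2 : x ⬝ᵥ ((G.adjMatrix ℝ) *ᵥ x)
        = ∑ v, ∑ u, (if G.Adj v u then x v * x u else 0) := by
      rw [SimpleGraph.dotProduct_mulVec_adjMatrix]
    rw [h1, h2, ← Finset.sum_add_distrib]
    refine Finset.sum_congr rfl fun v _ => ?_
    rw [← Finset.sum_add_distrib]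
    refine Finset.sum_congr rfl fun u _ => ?_
    by_cases h : G.Adj v u <;> simp [h]
  have hswap : x ⬝ᵥ (sLap G *ᵥ x) =
      ∑ v, ∑ u, (if G.Adj v u then x u ^ 2 + x v * x u else 0) := by
    rw [hq, Finset.sum_comm]
    refine Finset.sum_congr rfl fun v _ => Finset.sum_congr rfl fun u _ => ?_
    by_cases h : G.Adj v u
    · simp [h, h.symm, G.adj_comm]
      ring
    · have h' : ¬ G.Adj u v := fun hh => h hh.symm
      simp [h, h']
  have h2q : 2 * (x ⬝ᵥ (sLap G *ᵥ x)) =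
      ∑ v, ∑ u, (if G.Adj v u then (x v + x u)^2 else 0) := by
    nth_rewrite 1 [two_mul]
    nth_rewrite 1 [hq]
    nth_rewrite 1 [hswap]
    rw [← Finset.sum_add_distrib]
    refine Finset.sum_congr rfl fun v _ => ?_
    rw [← Finset.sum_add_distrib]
    refine Finset.sum_congr rfl fun u _ => ?_
    by_cases h : G.Adj v u <;> simp [h]
    ring
  nlinarith [Finset.sum_nonneg (fun v (_ : v ∈ (univ : Finset (Fin n))) =>
    Finset.sum_nonneg (fun u (_ : u ∈ (univ : Finset (Fin n))) =>
      (by positivity : (0:ℝ) ≤ if G.Adj v u then (x v + x u)^2 else 0)))]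

end Graph

section Constructions
variable {n : ℕ}

/-- A pair of vectors spanning a plane on which the Rayleigh quotient of `sLap G` is `≤ t`. -/
def GoodPair (G : SimpleGraph (Fin n)) (t : ℝ) (x y : Fin n → ℝ) : Prop :=
  (∀ a b : ℝ, a • x + b • y = 0 → a = 0 ∧ b = 0) ∧
  (∀ a b : ℝ, (a • x + b • y) ⬝ᵥ (sLap G *ᵥ (a • x + b • y)) ≤
     t * ((a • x + b • y) ⬝ᵥ (a • x + b • y)))

lemma eval2' (u v : Fin n) (huv : u ≠ v) (a b : ℝ) :
    (a • ev u + b • ev v) v = b := by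
  simp [ev, Pi.single_eq_of_ne huv.symm, Pi.single_eq_of_ne huv]

lemma eval3_1 (u v w : Fin n) (hvu : v ≠ u) (hwu : w ≠ u) (a b c : ℝ) :
    (a • ev u + b • ev v + c • ev w) u = a := by
  simp [ev, Pi.single_eq_of_ne hvu.symm, Pi.single_eq_of_ne hwu.symm]

lemma eval3_2 (u v w : Fin n) (huv : u ≠ v) (hwv : w ≠ v) (a b c : ℝ) :
    (a • ev u + b • ev v + c • ev w) v = b := by
  simp [ev, Pi.single_eq_of_ne huv.symm, Pi.single_eq_of_ne hwv.symm]

lemma eval3_3 (u v w : Fin n) (huw : u ≠ w) (hvw : v ≠ w) (a b c : ℝ) :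
    (a • ev u + b • ev v + c • ev w) w = c := by
  simp [ev, Pi.single_eq_of_ne huw.symm, Pi.single_eq_of_ne hvw.symm]

lemma good1 (G : SimpleGraph (Fin n)) (t : ℝ) {u v : Fin n} (huv : u ≠ v)
    (hadj : ¬ G.Adj u v) (hu : (G.degree u : ℝ) ≤ t) (hv : (G.degree v : ℝ) ≤ t) :
    GoodPair G t (ev u) (ev v) := by
  constructor
  · intro a b h
    constructor
    · have := congrFun h u
      rwa [eval2 u v huv] at this
    · have := congrFun h v
      rwa [eval2' u v huv] at this
  · intro a b
    rw [quad2, dot2 u v huv]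
    rw [sLap_diag, sLap_diag, sLap_offdiag G huv, sLap_offdiag G (Ne.symm huv)]
    have hadj' : ¬ G.Adj v u := fun h => hadj h.symm
    rw [if_neg hadj, if_neg hadj']
    nlinarith [sq_nonneg a, sq_nonneg b]

lemma good2 (G : SimpleGraph (Fin n)) (t : ℝ) {u v w : Fin n}
    (huv : u ≠ v) (huw : u ≠ w) (hvw : v ≠ w)
    (auv : G.Adj u v) (auw : G.Adj u w) (avw : G.Adj v w)
    (hu : (G.degree u : ℝ) ≤ t) (hv : (G.degree v : ℝ) ≤ t) (hw : (G.degree w : ℝ) ≤ t) :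
    GoodPair G t (ev u - ev v) (ev v - ev w) := by
  have hz : ∀ a b : ℝ, a • (ev u - ev v) + b • (ev v - ev w)
      = a • ev u + (b - a) • ev v + (-b) • ev w := by
    intro a b; funext i
    simp [ev]
    ring
  constructor
  · intro a b h
    rw [hz] at h
    constructor
    · have := congrFun h u
      rwa [eval3_1 u v w (Ne.symm huv) (Ne.symm huw)] at this
    · have := congrFun h w
      rw [eval3_3 u v w huw hvw] at this
      simp at this
      linarith
  · intro a b
    rw [hz, quad3, dot3 u v w huv huw hvw]
    rw [sLap_diag, sLap_diag, sLap_diag,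
      sLap_offdiag G huv, sLap_offdiag G (Ne.symm huv),
      sLap_offdiag G huw, sLap_offdiag G (Ne.symm huw),
      sLap_offdiag G hvw, sLap_offdiag G (Ne.symm hvw)]
    rw [if_pos auv, if_pos auv.symm, if_pos auw, if_pos auw.symm,
      if_pos avw, if_pos avw.symm]
    nlinarith [sq_nonneg a, sq_nonneg (b - a), sq_nonneg b]

lemma good3 (G : SimpleGraph (Fin n)) (t : ℝ) {r p q : Fin n}
    (hrp : r ≠ p) (hrq : r ≠ q) (hpq : p ≠ q)
    (apq : G.Adj p q) (nrp : ¬ G.Adj r p) (nrq : ¬ G.Adj r q)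
    (hr : (G.degree r : ℝ) ≤ t)
    (hsum : (G.degree p : ℝ) + (G.degree q : ℝ) ≤ 2*t + 2) :
    GoodPair G t (ev r) (ev p - ev q) := by
  have hz : ∀ a b : ℝ, a • (ev r) + b • (ev p - ev q)
      = a • ev r + b • ev p + (-b) • ev q := by
    intro a b; funext i
    simp [ev]
    ring
  constructor
  · intro a b h
    rw [hz] at h
    constructor
    · have := congrFun h r
      rwa [eval3_1 r p q (Ne.symm hrp) (Ne.symm hrq)] at this
    · have := congrFun h p
      rwa [eval3_2 r p q hrp (Ne.symm hpq)] at this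
  · intro a b
    rw [hz, quad3, dot3 r p q hrp hrq hpq]
    rw [sLap_diag, sLap_diag, sLap_diag,
      sLap_offdiag G hrp, sLap_offdiag G (Ne.symm hrp),
      sLap_offdiag G hrq, sLap_offdiag G (Ne.symm hrq),
      sLap_offdiag G hpq, sLap_offdiag G (Ne.symm hpq)]
    have nrp' : ¬ G.Adj p r := fun h => nrp h.symm
    have nrq' : ¬ G.Adj q r := fun h => nrq h.symm
    rw [if_neg nrp, if_neg nrp', if_neg nrq, if_neg nrq', if_pos apq, if_pos apq.symm]
    nlinarith [sq_nonneg a, sq_nonneg b]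

end Constructions

section Coverage
variable {n : ℕ}

lemma three_le_degree (G : SimpleGraph (Fin n)) {u a b c : Fin n}
    (hab : a ≠ b) (hac : a ≠ c) (hbc : b ≠ c)
    (ha : G.Adj u a) (hb : G.Adj u b) (hc : G.Adj u c) : 3 ≤ G.degree u := by
  have hsub : ({a, b, c} : Finset (Fin n)) ⊆ G.neighborFinset u := by
    intro x hx
    simp only [Finset.mem_insert, Finset.mem_singleton] at hx
    rcases hx with rfl | rfl | rfl <;> simp [SimpleGraph.mem_neighborFinset, *]
  have hcard : ({a, b, c} : Finset (Fin n)).card = 3 := by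
    rw [Finset.card_insert_of_notMem (by simp [hab, hac]),
      Finset.card_insert_of_notMem (by simp [hbc]), Finset.card_singleton]
  calc 3 = ({a, b, c} : Finset (Fin n)).card := hcard.symm
    _ ≤ (G.neighborFinset u).card := Finset.card_le_card hsub
    _ = G.degree u := G.card_neighborFinset_eq_degree u

lemma adj_of_degree (G : SimpleGraph (Fin n)) {u : Fin n} (h : n - 1 ≤ G.degree u)
    {x : Fin n} (hx : x ≠ u) : G.Adj u x := by
  have hsub : G.neighborFinset u ⊆ Finset.univ.erase u := by
    intro y hy
    rw [Finset.mem_erase]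
    exact ⟨(G.ne_of_adj ((G.mem_neighborFinset _ _).mp hy)).symm, Finset.mem_univ y⟩
  have hcard : (Finset.univ.erase u).card = n - 1 := by
    rw [Finset.card_erase_of_mem (Finset.mem_univ u)]
    simp
  have heq : G.neighborFinset u = Finset.univ.erase u := by
    apply Finset.eq_of_subset_of_card_le hsub
    rw [hcard, G.card_neighborFinset_eq_degree]
    exact h
  have : x ∈ G.neighborFinset u := by
    rw [heq, Finset.mem_erase]
    exact ⟨hx, Finset.mem_univ x⟩
  exact (G.mem_neighborFinset _ _).mp this

lemma degree_le_one (G : SimpleGraph (Fin n)) {p q : Fin n}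
    (h : ∀ y, G.Adj p y → y = q) : G.degree p ≤ 1 := by
  have hsub : G.neighborFinset p ⊆ {q} := by
    intro y hy
    rw [Finset.mem_singleton]
    exact h y ((G.mem_neighborFinset _ _).mp hy)
  calc G.degree p = (G.neighborFinset p).card := (G.card_neighborFinset_eq_degree p).symm
    _ ≤ ({q} : Finset (Fin n)).card := Finset.card_le_card hsub
    _ = 1 := Finset.card_singleton q

lemma exists_goodPair (hn : 3 ≤ n) (G : SimpleGraph (Fin n)) (t : ℕ)
    (hbig : (Finset.univ.filter fun v => t < G.degree v).card ≤ 2) :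
    ∃ x y : Fin n → ℝ, GoodPair G (t : ℝ) x y := by
  classical
  set W : Finset (Fin n) := Finset.univ.filter (fun v => G.degree v ≤ t) with hW
  have hWmem : ∀ v, v ∈ W ↔ G.degree v ≤ t := by
    intro v; simp [hW]
  have hWnotmem : ∀ v, v ∉ W → t + 1 ≤ G.degree v := by
    intro v hv
    rw [hWmem v] at hv
    omega
  have hWcard : n - 2 ≤ W.card := by
    have h := Finset.card_filter_add_card_filter_not
      (s := (Finset.univ : Finset (Fin n))) (p := fun v => t < G.degree v)
    have heq : (Finset.univ.filter fun v => ¬ t < G.degree v) = W := by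
      apply Finset.filter_congr
      intro v _
      simp [not_lt]
    rw [heq] at h
    have hcardn : (Finset.univ : Finset (Fin n)).card = n := by simp
    omega
  have hle : ∀ v ∈ W, (G.degree v : ℝ) ≤ (t : ℝ) := by
    intro v hv
    exact_mod_cast Nat.cast_le.mpr ((hWmem v).mp hv)
  by_cases hpair : ∃ u ∈ W, ∃ v ∈ W, u ≠ v ∧ ¬ G.Adj u v
  · obtain ⟨u, hu, v, hv, huv, hnadj⟩ := hpair
    exact ⟨_, _, good1 G _ huv hnadj (hle u hu) (hle v hv)⟩
  push_neg at hpair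
  by_cases htri : 3 ≤ W.card
  · obtain ⟨S, hSsub, hScard⟩ := Finset.exists_subset_card_eq htri
    obtain ⟨a, b, c, hab, hac, hbc, rfl⟩ := Finset.card_eq_three.mp hScard
    have haW : a ∈ W := hSsub (by simp)
    have hbW : b ∈ W := hSsub (by simp)
    have hcW : c ∈ W := hSsub (by simp)
    exact ⟨_, _, good2 G _ hab hac hbc (hpair a haW b hbW hab) (hpair a haW c hcW hac)
      (hpair b hbW c hcW hbc) (hle a haW) (hle b hbW) (hle c hcW)⟩
  push_neg at htri
  -- now `W.card ≤ 2`, hence `n ≤ 4`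
  have hn34 : n = 3 ∨ n = 4 := by omega
  have hdeglt : ∀ v : Fin n, G.degree v ≤ n - 1 := by
    intro v
    have := G.degree_lt_card_verts v
    rw [Fintype.card_fin] at this
    omega
  have one_le_deg : ∀ u v : Fin n, G.Adj u v → 1 ≤ G.degree u := by
    intro u v h
    rw [← G.card_neighborFinset_eq_degree]
    exact Finset.card_pos.mpr ⟨v, (G.mem_neighborFinset _ _).mpr h⟩
  have two_le_deg : ∀ u a b : Fin n, a ≠ b → G.Adj u a → G.Adj u b → 2 ≤ G.degree u := by
    intro u a b hab ha hb
    have hsub : ({a, b} : Finset (Fin n)) ⊆ G.neighborFinset u := by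
      intro x hx
      simp only [Finset.mem_insert, Finset.mem_singleton] at hx
      rcases hx with rfl | rfl <;> exact (G.mem_neighborFinset _ _).mpr (by assumption)
    have h2 : ({a, b} : Finset (Fin n)).card = 2 := by
      rw [Finset.card_insert_of_notMem (by simp [hab]), Finset.card_singleton]
    calc 2 = ({a, b} : Finset (Fin n)).card := h2.symm
      _ ≤ (G.neighborFinset u).card := Finset.card_le_card hsub
      _ = G.degree u := G.card_neighborFinset_eq_degree u
  have hc : W.card = 1 ∨ W.card = 2 := by omega
  rcases hc with h1 | h2
  · -- `W = {u}` with all other vertices of degree `> t`; forces `n = 3` and a perfect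
    -- matching-like situation, giving the third construction.
    have hn3 : n = 3 := by omega
    obtain ⟨u, hWu⟩ := Finset.card_eq_one.mp h1
    have hu : u ∈ W := by rw [hWu]; simp
    have hdu : G.degree u ≤ t := (hWmem u).mp hu
    have hcompl : (Wᶜ : Finset (Fin n)).card = 2 := by
      rw [Finset.card_compl, h1, Fintype.card_fin]
      omega
    obtain ⟨p, q, hpq, hWc⟩ := Finset.card_eq_two.mp hcompl
    have hpW : p ∉ W := Finset.mem_compl.mp (by rw [hWc]; simp)
    have hqW : q ∉ W := Finset.mem_compl.mp (by rw [hWc]; simp)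
    have hpu : p ≠ u := fun h => hpW (h ▸ hu)
    have hqu : q ≠ u := fun h => hqW (h ▸ hu)
    have huniv : ∀ y : Fin n, y = u ∨ y = p ∨ y = q := by
      intro y
      by_cases hy : y ∈ W
      · left; rw [hWu] at hy; simpa using hy
      · right
        have : y ∈ Wᶜ := Finset.mem_compl.mpr hy
        rw [hWc] at this
        simpa using this
    have key : ∀ p' q' : Fin n, p' ∉ W → q' ∉ W → p' ≠ q' → p' ≠ u → q' ≠ u →
        ¬ G.Adj u p' := by
      intro p' q' hp' hq' hpq' hpu' hqu' hadj
      have ht1 : 1 ≤ t := le_trans (one_le_deg u p' hadj) hdu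
      have hdp' : t + 1 ≤ G.degree p' := hWnotmem _ hp'
      have h2' : G.degree p' ≤ n - 1 := hdeglt p'
      have hdq' : t + 1 ≤ G.degree q' := hWnotmem _ hq'
      have h2q : G.degree q' ≤ n - 1 := hdeglt q'
      have haq : ∀ x, x ≠ q' → G.Adj q' x := fun x hx =>
        adj_of_degree G (by omega) hx
      have h2u : 2 ≤ G.degree u := two_le_deg u p' q' hpq' hadj (haq u hqu'.symm).symm
      have hap : ∀ x, x ≠ p' → G.Adj p' x := fun x hx =>
        adj_of_degree G (by omega) hx
      omega
    have hup : ¬ G.Adj u p := key p q hpW hqW hpq hpu hqu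
    have huq : ¬ G.Adj u q := key q p hqW hpW hpq.symm hqu hpu
    have hdp : G.degree p ≤ 1 := by
      apply degree_le_one G
      intro y hy
      rcases huniv y with rfl | rfl | rfl
      · exact absurd hy.symm hup
      · exact absurd hy (G.irrefl)
      · rfl
    have hdq : G.degree q ≤ 1 := by
      apply degree_le_one G
      intro y hy
      rcases huniv y with rfl | rfl | rfl
      · exact absurd hy.symm huq
      · rfl
      · exact absurd hy (G.irrefl)
    have hdp1 : t + 1 ≤ G.degree p := hWnotmem _ hpW
    have ht0 : t = 0 := by omega
    -- `p` has a neighbour, which can only be `q`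
    have hApq : G.Adj p q := by
      have hpos : 0 < (G.neighborFinset p).card := by
        rw [G.card_neighborFinset_eq_degree]
        omega
      obtain ⟨y, hy⟩ := Finset.card_pos.mp hpos
      have hy' : G.Adj p y := (G.mem_neighborFinset _ _).mp hy
      rcases huniv y with rfl | rfl | rfl
      · exact absurd hy'.symm hup
      · exact absurd hy' (G.irrefl)
      · exact hy'
    refine ⟨_, _, good3 G (t : ℝ) hpu.symm hqu.symm hpq hApq hup huq ?_ ?_⟩
    · exact_mod_cast Nat.cast_le.mpr hdu
    · have : G.degree p + G.degree q ≤ 2 * t + 2 := by omega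
      push_cast
      exact_mod_cast this
  · -- `W = {u, v}` adjacent, all other vertices of degree `> t`: impossible.
    exfalso
    obtain ⟨u, v, huv, hWuv⟩ := Finset.card_eq_two.mp h2
    have hu : u ∈ W := by rw [hWuv]; simp
    have hv : v ∈ W := by rw [hWuv]; simp
    have hdu : G.degree u ≤ t := (hWmem u).mp hu
    have hdv : G.degree v ≤ t := (hWmem v).mp hv
    have hauv : G.Adj u v := hpair u hu v hv huv
    have ht1 : 1 ≤ t := le_trans (one_le_deg u v hauv) hdu
    rcases hn34 with hn3 | hn4
    · -- n = 3 : the third vertex has huge degree, contradiction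
      have hq : ∃ q : Fin n, q ≠ u ∧ q ≠ v := by
        by_contra h
        push_neg at h
        have hsub : (Finset.univ : Finset (Fin n)) ⊆ {u, v} := by
          intro y _
          simp only [Finset.mem_insert, Finset.mem_singleton]
          by_cases hyu : y = u
          · exact Or.inl hyu
          · exact Or.inr (h y hyu)
        have := Finset.card_le_card hsub
        have hc2 : ({u, v} : Finset (Fin n)).card ≤ 2 :=
          le_trans (Finset.card_insert_le _ _) (by simp)
        simp only [Finset.card_univ, Fintype.card_fin] at this
        omega
      obtain ⟨q, hqu, hqv⟩ := hq
      have hqW : q ∉ W := by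
        rw [hWuv]
        simp [hqu, hqv]
      have hdq : t + 1 ≤ G.degree q := hWnotmem _ hqW
      have hdq2 : G.degree q ≤ n - 1 := hdeglt q
      have hadjq : ∀ x, x ≠ q → G.Adj q x := fun x hx =>
        adj_of_degree G (by omega) hx
      have h2u : 2 ≤ G.degree u :=
        two_le_deg u v q (fun h => hqv h.symm) hauv (hadjq u hqu.symm).symm
      omega
    · -- n = 4
      have hcompl : (Wᶜ : Finset (Fin n)).card = 2 := by
        rw [Finset.card_compl, h2, Fintype.card_fin]
        omega
      obtain ⟨p, q, hpq, hWc⟩ := Finset.card_eq_two.mp hcompl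
      have hpW : p ∉ W := Finset.mem_compl.mp (by rw [hWc]; simp)
      have hqW : q ∉ W := Finset.mem_compl.mp (by rw [hWc]; simp)
      have hpu : p ≠ u := fun h => hpW (h ▸ hu)
      have hpv : p ≠ v := fun h => hpW (h ▸ hv)
      have hqu : q ≠ u := fun h => hqW (h ▸ hu)
      have hqv : q ≠ v := fun h => hqW (h ▸ hv)
      have huniv : ∀ y : Fin n, y = u ∨ y = v ∨ y = p ∨ y = q := by
        intro y
        by_cases hy : y ∈ W
        · rw [hWuv] at hy
          simp only [Finset.mem_insert, Finset.mem_singleton] at hy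
          tauto
        · have : y ∈ Wᶜ := Finset.mem_compl.mpr hy
          rw [hWc] at this
          simp only [Finset.mem_insert, Finset.mem_singleton] at this
          tauto
      have hdp : t + 1 ≤ G.degree p := hWnotmem _ hpW
      have hdq : t + 1 ≤ G.degree q := hWnotmem _ hqW
      have hdp3 : G.degree p ≤ n - 1 := hdeglt p
      have hdq3 : G.degree q ≤ n - 1 := hdeglt q
      by_cases ht : t = 1
      · -- all of u,v have degree 1; p,q can only be adjacent to each other
        have hup : ¬ G.Adj u p := fun h => by
          have := two_le_deg u v p (fun hh => hpv hh.symm) hauv h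
          omega
        have huq : ¬ G.Adj u q := fun h => by
          have := two_le_deg u v q (fun hh => hqv hh.symm) hauv h
          omega
        have hvp : ¬ G.Adj v p := fun h => by
          have := two_le_deg v u p (fun hh => hpu hh.symm) hauv.symm h
          omega
        have hvq : ¬ G.Adj v q := fun h => by
          have := two_le_deg v u q (fun hh => hqu hh.symm) hauv.symm h
          omega
        have hdp1 : G.degree p ≤ 1 := by
          apply degree_le_one G
          intro y hy
          rcases huniv y with rfl | rfl | rfl | rfl
          · exact absurd hy.symm hup
          · exact absurd hy.symm hvp
          · exact absurd hy (G.irrefl)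
          · rfl
        omega
      · -- t = 2 : p and q are adjacent to everything, contradiction at u
        have ht2 : t = 2 := by omega
        have hap : ∀ x, x ≠ p → G.Adj p x := fun x hx =>
          adj_of_degree G (by omega) hx
        have haq : ∀ x, x ≠ q → G.Adj q x := fun x hx =>
          adj_of_degree G (by omega) hx
        have h3u : 3 ≤ G.degree u :=
          three_le_degree G (fun h => hpv h.symm) (fun h => hqv h.symm) hpq
            hauv (hap u hpu.symm).symm (haq u hqu.symm).symm
        omega

end Coverage

theorem stmt16 {n : ℕ} (hn : 3 ≤ n) (G : SimpleGraph (Fin n))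
    (hQ : (sLap G).IsHermitian)
    (d : Fin n → ℕ) (hd : Antitone d) (σ : Equiv.Perm (Fin n))
    (hdσ : ∀ i, d i = G.degree (σ i)) :
    eigCount hQ (Set.Icc (0 : ℝ) (d ⟨2, by omega⟩ : ℝ)) ≠ 1 := by
  intro hone
  set t : ℕ := d ⟨2, by omega⟩ with ht
  have hbig : (Finset.univ.filter fun v => t < G.degree v).card ≤ 2 := by
    have hsub : (Finset.univ.filter fun v => t < G.degree v) ⊆
        {σ ⟨0, by omega⟩, σ ⟨1, by omega⟩} := by
      intro v hv
      rw [Finset.mem_filter] at hv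
      set i := σ.symm v with hi
      have hvi : v = σ i := (σ.apply_symm_apply v).symm
      have hdi : G.degree v = d i := by rw [hvi, ← hdσ i]
      by_cases h2i : 2 ≤ i.val
      · exfalso
        have hle : d i ≤ d ⟨2, by omega⟩ := by
          apply hd
          rw [Fin.le_def]
          exact h2i
        have := hv.2
        omega
      · simp only [Finset.mem_insert, Finset.mem_singleton]
        have hior : i = ⟨0, by omega⟩ ∨ i = ⟨1, by omega⟩ := by
          have hor : i.val = 0 ∨ i.val = 1 := by omega
          rcases hor with h | h
          · left; exact Fin.ext h
          · right; exact Fin.ext h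
        rcases hior with h | h
        · left; rw [hvi, h]
        · right; rw [hvi, h]
    calc (Finset.univ.filter fun v => t < G.degree v).card
        ≤ ({σ ⟨0, by omega⟩, σ ⟨1, by omega⟩} : Finset (Fin n)).card :=
          Finset.card_le_card hsub
      _ ≤ 2 := le_trans (Finset.card_insert_le _ _) (by simp)
  obtain ⟨x, y, hind, hquad⟩ := exists_goodPair hn G t hbig
  have h2 := two_le_count hQ (t : ℝ) (sLap_pos G) x y hind hquad
  unfold eigCount at hone
  rw [Finset.filter_congr_decidable] at hone
  omega
end
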